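/- arXiv:2306.17041 — 6 statements merged into one kernel-verified Lean document; each statement's English description precedes it below -/
import Mathlib

section
/- An array T with v^t rows and n columns over the alphabet Z_v is a VOA induced by the uniform matroid U_{t,n} (with level v) if and only if T is an orthogonal array OA(t, n, v) of index unity. -/
/-!
Write `m = |{j | T j = f on A}|` for the number of rows matching `f` on the columns `A`.
If `T` has index unity, induction on `t - |A|` gives `m = v ^ (t - |A|)` for `|A| ≤ t`:
adding a column `x ∉ A` splits the matching rows according to their entry in column `x`.
For `|A| ≥ t` every row `i` is the only one matching itself on a `t`-subset of `A`, so
`m = 1`. Conversely, if every row is the only one matching itself on a `t`-set `A`, the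
restriction of rows to `A` is an injection between two sets of size `v ^ t`, hence a
bijection, which is index unity on `A`.
-/

open Finset Function

variable {ι κ α : Type*} [Fintype ι] [DecidableEq α]

def matchingRows (T : ι → κ → α) (A : Finset κ) (f : κ → α) : Finset ι :=
  Finset.univ.filter (fun j => ∀ a ∈ A, T j a = f a)

/-- Over `Fin n` the filter elaborates with `Nat.decidableForallFin`, which is not
definitionally the instance inside `matchingRows`. -/
theorem matchingRows_eq_filter (T : ι → κ → α) (A : Finset κ) (f : κ → α)
    [DecidablePred fun j => ∀ a ∈ A, T j a = f a] :
    matchingRows T A f = Finset.univ.filter (fun j => ∀ a ∈ A, T j a = f a) := by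
  unfold matchingRows
  congr

@[simp]
theorem mem_matchingRows {T : ι → κ → α} {A : Finset κ} {f : κ → α} {j : ι} :
    j ∈ matchingRows T A f ↔ ∀ a ∈ A, T j a = f a := by
  simp [matchingRows]

theorem self_mem_matchingRows (T : ι → κ → α) (A : Finset κ) (i : ι) :
    i ∈ matchingRows T A (T i) :=
  mem_matchingRows.2 fun _ _ => rfl

theorem matchingRows_anti (T : ι → κ → α) {A B : Finset κ} (hBA : B ⊆ A) (f : κ → α) :
    matchingRows T A f ⊆ matchingRows T B f := fun _ hj =>
  mem_matchingRows.2 fun b hb => mem_matchingRows.1 hj b (hBA hb)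

theorem matchingRows_congr (T : ι → κ → α) (A : Finset κ) {f g : κ → α}
    (hfg : ∀ a ∈ A, f a = g a) : matchingRows T A f = matchingRows T A g := by
  ext j
  simp only [mem_matchingRows]
  exact forall₂_congr fun a ha => by rw [hfg a ha]

section Insert

variable [DecidableEq κ]

theorem filter_matchingRows_eq_matchingRows_insert (T : ι → κ → α) {A : Finset κ} {x : κ}
    (hx : x ∉ A) (f : κ → α) (c : α) :
    (matchingRows T A f).filter (fun j => T j x = c) =
      matchingRows T (insert x A) (update f x c) := by
  ext j
  have hupdate : ∀ a ∈ A, update f x c a = f a := fun a ha =>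
    update_of_ne (ne_of_mem_of_not_mem ha hx) c f
  simp only [mem_filter, mem_matchingRows, forall_mem_insert, update_self]
  constructor
  · rintro ⟨hA, hc⟩
    exact ⟨hc, fun a ha => (hA a ha).trans (hupdate a ha).symm⟩
  · rintro ⟨hc, hA⟩
    exact ⟨fun a ha => (hA a ha).trans (hupdate a ha), hc⟩

theorem card_matchingRows_eq_sum_insert [Fintype α] (T : ι → κ → α) {A : Finset κ} {x : κ}
    (hx : x ∉ A) (f : κ → α) :
    #(matchingRows T A f) = ∑ c : α, #(matchingRows T (insert x A) (update f x c)) := by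
  rw [card_eq_sum_card_fiberwise (fun j _ => mem_univ (T j x))]
  simp only [filter_matchingRows_eq_matchingRows_insert T hx]

end Insert

theorem card_matchingRows_of_index_one [Fintype κ] [DecidableEq κ] [Fintype α]
    (T : ι → κ → α) {t : ℕ} (ht : t ≤ Fintype.card κ)
    (hT : ∀ A : Finset κ, #A = t → ∀ f, #(matchingRows T A f) = 1)
    {A : Finset κ} (hA : #A ≤ t) (f : κ → α) :
    #(matchingRows T A f) = Fintype.card α ^ (t - #A) := by
  obtain ⟨k, hk⟩ := Nat.exists_eq_add_of_le hA
  rw [show t - #A = k by omega]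
  clear hA
  induction k generalizing A f with
  | zero => exact hT A hk.symm f
  | succ k ih =>
    obtain ⟨x, hx⟩ : ∃ x, x ∉ A := by
      by_contra! h
      have : #A = Fintype.card κ := by rw [eq_univ_of_forall h, card_univ]
      omega
    rw [card_matchingRows_eq_sum_insert T hx]
    simp only [fun c => ih (A := insert x A) (update f x c) (by rw [card_insert_of_notMem hx]; omega),
      sum_const, card_univ, smul_eq_mul, pow_succ']

theorem card_matchingRows_self_eq_one_of_le (T : ι → κ → α) {t : ℕ}
    (hT : ∀ A : Finset κ, #A = t → ∀ f, #(matchingRows T A f) = 1)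
    {A : Finset κ} (hA : t ≤ #A) (i : ι) :
    #(matchingRows T A (T i)) = 1 := by
  obtain ⟨B, hBA, hB⟩ := exists_subset_card_eq hA
  have hle := card_le_card (matchingRows_anti T hBA (T i))
  have hpos := card_pos.2 ⟨i, self_mem_matchingRows T A i⟩
  rw [hT B hB] at hle
  omega

theorem card_matchingRows_eq_one [Fintype α] (T : ι → κ → α) (A : Finset κ)
    (hcard : Fintype.card ι = Fintype.card α ^ #A)
    (hT : ∀ i, #(matchingRows T A (T i)) = 1) (f : κ → α) :
    #(matchingRows T A f) = 1 := by
  classical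
  let restrict : ι → (A → α) := fun j a => T j a
  have hinj : Injective restrict := fun j j' h =>
    card_le_one.1 (hT j).le j' (mem_matchingRows.2 fun a ha => congrFun h.symm ⟨a, ha⟩)
      j (self_mem_matchingRows T A j) |>.symm
  have hbij : Bijective restrict :=
    (Fintype.bijective_iff_injective_and_card restrict).2 ⟨hinj, by simp [hcard]⟩
  obtain ⟨j, hj⟩ := hbij.surjective fun a => f a
  rw [matchingRows_congr T A fun a ha => (congrFun hj ⟨a, ha⟩).symm]
  exact hT j

theorem voa_uniform_iff_oa_general (n t v : ℕ) (ht : t ≤ n)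
    (T : Fin (v ^ t) → Fin n → Fin v) :
    (∀ A : Finset (Fin n), ∀ i,
      (Finset.univ.filter (fun j => ∀ a ∈ A, T j a = T i a)).card
        = v ^ (t - min t A.card))
    ↔
    (∀ A : Finset (Fin n), A.card = t → ∀ f : Fin n → Fin v,
      (Finset.univ.filter (fun j => ∀ a ∈ A, T j a = f a)).card = 1) := by
  simp only [← matchingRows_eq_filter]
  constructor
  · intro hVOA A hA f
    refine card_matchingRows_eq_one T A (by simp [hA]) (fun i => ?_) f
    simpa [hA] using hVOA A i
  · intro hOA A i
    rcases le_total #A t with hle | hle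
    · rw [min_eq_right hle]
      simpa using card_matchingRows_of_index_one T (by simpa using ht) hOA hle (T i)
    · rw [min_eq_left hle, Nat.sub_self, pow_zero]
      exact card_matchingRows_self_eq_one_of_le T hOA hle i

/-- An array `T` with `v^t` rows and `n` columns over `Z_v` is a
`VOA(U_{t,n}, v)` (rank function `A ↦ min t |A|`) if and only if it is an
orthogonal array `OA(t, n, v)` of index unity. -/
theorem voa_uniform_iff_oa (n t v : ℕ) (ht : t ≤ n) (hv : 2 ≤ v)
    (T : Fin (v ^ t) → Fin n → Fin v) :
    (∀ A : Finset (Fin n), ∀ i,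
      (Finset.univ.filter (fun j => ∀ a ∈ A, T j a = T i a)).card
        = v ^ (t - min t A.card))
    ↔
    (∀ A : Finset (Fin n), A.card = t → ∀ f : Fin n → Fin v,
      (Finset.univ.filter (fun j => ∀ a ∈ A, T j a = f a)).card = 1) :=
  voa_uniform_iff_oa_general n t v ht T
end

section
/- If T is a VOA(M, v) for a matroid M = (N, r) and S ⊆ N, and a is any row appearing in the subarray T(S), then the array T|_{S:a}, whose rows are the restrictions to N \ S of those rows c of T with c(S) = a, is a VOA(M/S, v), where M/S is the contraction of S from M with rank function r'(A) = r(A∪S) − r(S). -/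
/-! Rows of `T` that agree with `T i₀` on `S` and with a row `T i` of the same kind on `A ⊆ N \ S`
are exactly the rows that agree with `T i` on `A ∪ S`. Their number is therefore
`v ^ (r N - r (A ∪ S))` by the VOA property of `T`, which is `v ^ (r' (N \ S) - r' A)` for the
contracted rank function `r' B = r (B ∪ S) - r S`. -/

theorem forall_mem_union_eq_iff {α β : Type*} [DecidableEq α] {f g h : α → β}
    {A S : Finset α} (hgh : ∀ s ∈ S, g s = h s) :
    ((∀ s ∈ S, f s = h s) ∧ ∀ a ∈ A, f a = g a) ↔ ∀ a ∈ A ∪ S, f a = g a := by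
  simp only [Finset.mem_union, or_imp, forall_and]
  constructor
  · rintro ⟨hfh, hfg⟩
    exact ⟨hfg, fun s hs => (hfh s hs).trans (hgh s hs).symm⟩
  · rintro ⟨hfg, hfg'⟩
    exact ⟨fun s hs => (hfg' s hs).trans (hgh s hs), hfg⟩

theorem voa_contraction_general {α : Type*} [DecidableEq α]
    (N : Finset α) (r : Finset α → ℤ)
    (v : ℕ)
    (T : Fin (v ^ (r N).toNat) → α → Fin v)
    (hT : ∀ A ⊆ N, ∀ i,
      (Finset.univ.filter (fun j => ∀ a ∈ A, T j a = T i a)).card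
        = v ^ (r N - r A).toNat)
    (S : Finset α) (hS : S ⊆ N)
    (i₀ : Fin (v ^ (r N).toNat)) :
    -- the contracted array has v^{r'(N')} rows
    (Finset.univ.filter (fun j => ∀ s ∈ S, T j s = T i₀ s)).card
        = v ^ (r ((N \ S) ∪ S) - r S).toNat ∧
    -- and it satisfies the VOA condition for the contraction M/S
    (∀ A ⊆ N \ S, ∀ i, (∀ s ∈ S, T i s = T i₀ s) →
      (Finset.univ.filter (fun j =>
          (∀ s ∈ S, T j s = T i₀ s) ∧ ∀ a ∈ A, T j a = T i a)).card
        = v ^ ((r ((N \ S) ∪ S) - r S) - (r (A ∪ S) - r S)).toNat) := by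
  rw [Finset.sdiff_union_of_subset hS]
  refine ⟨hT S hS i₀, fun A hA i hi => ?_⟩
  have hAS : A ∪ S ⊆ N := Finset.union_subset (hA.trans Finset.sdiff_subset) hS
  simp_rw [forall_mem_union_eq_iff hi, hT (A ∪ S) hAS i]
  congr 1
  omega

/-- Contraction of a VOA: if `T` is a `VOA(M, v)`, `S ⊆ N` and `a` is the
row `T i₀` restricted to `S`, then the array whose rows are the restrictions
to `N \ S` of those rows `c` of `T` with `c(S) = a` is a `VOA(M/S, v)`,
where `M/S` has rank function `r'(A) = r(A ∪ S) - r(S)`. -/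
theorem voa_contraction {α : Type*} [DecidableEq α]
    (N : Finset α) (r : Finset α → ℤ)
    (h1 : ∀ A ⊆ N, 0 ≤ r A ∧ r A ≤ A.card)
    (h2 : ∀ A B : Finset α, A ⊆ B → B ⊆ N → r A ≤ r B)
    (h3 : ∀ A B : Finset α, A ⊆ N → B ⊆ N →
      r (A ∪ B) + r (A ∩ B) ≤ r A + r B)
    (v : ℕ) (hv : 2 ≤ v)
    (T : Fin (v ^ (r N).toNat) → α → Fin v)
    (hT : ∀ A ⊆ N, ∀ i,
      (Finset.univ.filter (fun j => ∀ a ∈ A, T j a = T i a)).card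
        = v ^ (r N - r A).toNat)
    (S : Finset α) (hS : S ⊆ N)
    (i₀ : Fin (v ^ (r N).toNat)) :
    -- the contracted array has v^{r'(N')} rows
    (Finset.univ.filter (fun j => ∀ s ∈ S, T j s = T i₀ s)).card
        = v ^ (r ((N \ S) ∪ S) - r S).toNat ∧
    -- and it satisfies the VOA condition for the contraction M/S
    (∀ A ⊆ N \ S, ∀ i, (∀ s ∈ S, T i s = T i₀ s) →
      (Finset.univ.filter (fun j =>
          (∀ s ∈ S, T j s = T i₀ s) ∧ ∀ a ∈ A, T j a = T i a)).card
        = v ^ ((r ((N \ S) ∪ S) - r S) - (r (A ∪ S) - r S)).toNat) :=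
  voa_contraction_general N r v T hT S hS i₀
end

section
/- If T is a VOA(M, v) for a matroid M = (N, r) and S ⊆ N, then the deduplication of the subarray T(N\S) (the multiset of rows of T restricted to columns N\S, with each distinct row kept once) is a VOA(M\S, v), where M\S is the restriction of M to N\S with rank function r'(A) = r(A) for A ⊆ N\S. -/
/-!
Restricting the rows of `T` to `B = N \ S` is a map whose fibres are the classes of rows agreeing
on `B`, all of size `v ^ (r N - r B)`. For `A ⊆ B`, the rows agreeing with a fixed row on `A` form
a union of such fibres, so counting them through the restriction map divides their number
`v ^ (r N - r A)` by `v ^ (r N - r B)`; taking all rows gives the number of distinct restrictions.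
-/

open Finset

theorem Finset.card_eq_card_image_mul_of_card_fiber {ι β : Type*} [DecidableEq β]
    {f : ι → β} {s : Finset ι} {c : ℕ} (h : ∀ i ∈ s, #{j ∈ s | f j = f i} = c) :
    #s = #(s.image f) * c := by
  rw [card_eq_sum_card_image f s, sum_const_nat]
  intro b hb
  obtain ⟨i, hi, rfl⟩ := mem_image.1 hb
  exact h i hi

theorem Nat.eq_pow_toNat_sub_of_mul_eq {v x : ℕ} (hv : 0 < v) {a b c : ℤ} (hab : a ≤ b)
    (hbc : b ≤ c) (h : v ^ (c - a).toNat = x * v ^ (c - b).toNat) :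
    x = v ^ (b - a).toNat := by
  have hexp : (c - a).toNat = (b - a).toNat + (c - b).toNat := by omega
  rw [hexp, pow_add] at h
  exact (Nat.eq_of_mul_eq_mul_right (by positivity) h).symm

namespace OrthogonalArray

variable {ι α κ : Type*} [Fintype ι] [DecidableEq κ]

def rowsAgreeing (T : ι → α → κ) (A : Finset α) (i : ι) : Finset ι :=
  {j | ∀ a ∈ A, T j a = T i a}

theorem mem_rowsAgreeing {T : ι → α → κ} {A : Finset α} {i j : ι} :
    j ∈ rowsAgreeing T A i ↔ ∀ a ∈ A, T j a = T i a := by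
  simp [rowsAgreeing]

theorem restrict_eq_restrict_iff {T : ι → α → κ} {B : Finset α} {i j : ι} :
    B.restrict (T j) = B.restrict (T i) ↔ j ∈ rowsAgreeing T B i := by
  simp [mem_rowsAgreeing, funext_iff, Finset.restrict]

theorem rowsAgreeing_subset_of_mem {T : ι → α → κ} {A B : Finset α} (hAB : A ⊆ B) {i k : ι}
    (hk : k ∈ rowsAgreeing T A i) : rowsAgreeing T B k ⊆ rowsAgreeing T A i := by
  intro j hj
  rw [mem_rowsAgreeing] at hj hk ⊢
  intro a ha
  rw [hj a (hAB ha), hk a ha]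

theorem card_eq_card_image_restrict_mul (T : ι → α → κ) (B : Finset α) {s : Finset ι} {c : ℕ}
    (hs : ∀ k ∈ s, rowsAgreeing T B k ⊆ s) (hc : ∀ k, #(rowsAgreeing T B k) = c) :
    #s = #(s.image fun j => B.restrict (T j)) * c := by
  refine card_eq_card_image_mul_of_card_fiber fun k hk => ?_
  rw [← hc k]
  congr 1
  ext j
  simp only [mem_filter, restrict_eq_restrict_iff]
  exact ⟨And.right, fun hj => ⟨hs k hk hj, hj⟩⟩

theorem filter_image_restrict_eq_image_rowsAgreeing [DecidableEq α] (T : ι → α → κ)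
    {A B : Finset α} (hAB : A ⊆ B) (i : ι) :
    (univ.image fun j => B.restrict (T j)).filter
        (fun g => ∀ a : {x // x ∈ B}, (a : α) ∈ A → g a = B.restrict (T i) a) =
      (rowsAgreeing T A i).image fun j => B.restrict (T j) := by
  rw [filter_image]
  congr 1
  ext j
  simp only [mem_filter, mem_univ, true_and, mem_rowsAgreeing, Subtype.forall, Finset.restrict]
  exact ⟨fun h a ha => h a (hAB ha) ha, fun h a _ ha => h a ha⟩

end OrthogonalArray

open OrthogonalArray in
theorem voa_deletion_general {α : Type*} [DecidableEq α]
    (N : Finset α) (r : Finset α → ℤ)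
    (h1 : ∀ A ⊆ N, 0 ≤ r A ∧ r A ≤ A.card)
    (h2 : ∀ A B : Finset α, A ⊆ B → B ⊆ N → r A ≤ r B)
    (v : ℕ) (hv : 2 ≤ v)
    (T : Fin (v ^ (r N).toNat) → α → Fin v)
    (hT : ∀ A ⊆ N, ∀ i,
      (Finset.univ.filter (fun j => ∀ a ∈ A, T j a = T i a)).card
        = v ^ (r N - r A).toNat)
    (S : Finset α) :
    -- D is the deduplicated array of rows restricted to N \ S
    ∀ D : Finset ({x // x ∈ N \ S} → Fin v),
      D = Finset.univ.image
            (fun j : Fin (v ^ (r N).toNat) =>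
              (fun a : {x // x ∈ N \ S} => T j (a : α))) →
      -- D has v^{r(N\S)} rows
      D.card = v ^ (r (N \ S)).toNat ∧
      -- and D satisfies the VOA condition for the restriction M \ S
      (∀ A ⊆ N \ S, ∀ g ∈ D,
        (D.filter (fun g' => ∀ a : {x // x ∈ N \ S},
            (a : α) ∈ A → g' a = g a)).card
          = v ^ (r (N \ S) - r A).toNat) := by
  rintro D rfl
  have hv0 : 0 < v := by omega
  have hB : N \ S ⊆ N := sdiff_subset
  have hrB : r (N \ S) ≤ r N := h2 _ _ hB subset_rfl
  have hfib := hT (N \ S) hB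
  refine ⟨?_, ?_⟩
  · have hcard := card_eq_card_image_restrict_mul T (N \ S) (fun _ _ => subset_univ _) hfib
    rw [card_univ, Fintype.card_fin] at hcard
    have hD := Nat.eq_pow_toNat_sub_of_mul_eq (a := 0) hv0 (h1 _ hB).1 hrB (by rwa [sub_zero])
    rwa [sub_zero] at hD
  · intro A hA g hg
    obtain ⟨i, -, rfl⟩ := mem_image.1 hg
    refine (congrArg card (filter_image_restrict_eq_image_rowsAgreeing T hA i)).trans ?_
    have hcard := card_eq_card_image_restrict_mul T (N \ S) (s := rowsAgreeing T A i)
      (fun _ hk => rowsAgreeing_subset_of_mem hA hk) hfib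
    rw [rowsAgreeing, hT A (hA.trans hB) i] at hcard
    exact Nat.eq_pow_toNat_sub_of_mul_eq hv0 (h2 _ _ hA hB) hrB hcard

/-- Deletion of a VOA: if `T` is a `VOA(M, v)` and `S ⊆ N`, then the
deduplication of `T(N \ S)` (the set of distinct restrictions of the rows of
`T` to `N \ S`) is a `VOA(M \ S, v)`, where `M \ S` is the restriction of
`M` to `N \ S`. -/
theorem voa_deletion {α : Type*} [DecidableEq α]
    (N : Finset α) (r : Finset α → ℤ)
    (h1 : ∀ A ⊆ N, 0 ≤ r A ∧ r A ≤ A.card)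
    (h2 : ∀ A B : Finset α, A ⊆ B → B ⊆ N → r A ≤ r B)
    (h3 : ∀ A B : Finset α, A ⊆ N → B ⊆ N →
      r (A ∪ B) + r (A ∩ B) ≤ r A + r B)
    (v : ℕ) (hv : 2 ≤ v)
    (T : Fin (v ^ (r N).toNat) → α → Fin v)
    (hT : ∀ A ⊆ N, ∀ i,
      (Finset.univ.filter (fun j => ∀ a ∈ A, T j a = T i a)).card
        = v ^ (r N - r A).toNat)
    (S : Finset α) (hS : S ⊆ N) :
    -- D is the deduplicated array of rows restricted to N \ S
    ∀ D : Finset ({x // x ∈ N \ S} → Fin v),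
      D = Finset.univ.image
            (fun j : Fin (v ^ (r N).toNat) =>
              (fun a : {x // x ∈ N \ S} => T j (a : α))) →
      -- D has v^{r(N\S)} rows
      D.card = v ^ (r (N \ S)).toNat ∧
      -- and D satisfies the VOA condition for the restriction M \ S
      (∀ A ⊆ N \ S, ∀ g ∈ D,
        (D.filter (fun g' => ∀ a : {x // x ∈ N \ S},
            (a : α) ∈ A → g' a = g a)).card
          = v ^ (r (N \ S) - r A).toNat) :=
  voa_deletion_general N r h1 h2 v hv T hT S
end

section
/- If M' is a minor of M (i.e., M' = M \ S / T for disjoint S, T ⊆ N), then the p-characteristic set of M is contained in the p-characteristic set of M': χ_M ⊆ χ_{M'}. -/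
/-! Fix a row `i₀` of a VOA(M, v). The rows agreeing with it on `T'` realise the contraction
`M / T'`; restricting them to `(N \ S) \ T'` and discarding repetitions realises the deletion of
`S`. Each restricted row comes from exactly `v ^ (r N - r (N \ S))` rows, so every agreement count
of the minor is the corresponding count of `M` divided by that number. -/

open Finset

section Agreement

variable {ι κ α β : Type*} [DecidableEq β]

def agreeing (s : Finset ι) (T : ι → α → β) (A : Finset α) (i : ι) : Finset ι :=
  {j ∈ s | ∀ a ∈ A, T j a = T i a}

lemma mem_agreeing {s : Finset ι} {T : ι → α → β} {A : Finset α} {i j : ι} :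
    j ∈ agreeing s T A i ↔ j ∈ s ∧ ∀ a ∈ A, T j a = T i a :=
  mem_filter

lemma agreeing_agreeing [DecidableEq α] {s : Finset ι} {T : ι → α → β} {A B : Finset α}
    {i j : ι} (hj : j ∈ agreeing s T B i) :
    agreeing (agreeing s T B i) T A j = agreeing s T (A ∪ B) j := by
  ext k
  simp only [mem_agreeing, mem_union] at hj ⊢
  grind

lemma agreeing_empty (s : Finset ι) (T : ι → α → β) (i : ι) : agreeing s T ∅ i = s :=
  filter_true_of_mem fun _ _ _ h => absurd h (notMem_empty _)

lemma card_agreeing_univ_equiv [Fintype κ] (R : Finset (α → β)) (e : R ≃ κ) (A : Finset α)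
    (k : κ) :
    #(agreeing univ (fun l => (e.symm l).1) A k) = #(agreeing R id A (e.symm k)) := by
  refine card_bij (fun l _ => (e.symm l).1) (fun l hl => ?_) (fun l _ l' _ h => ?_) fun p hp => ?_
  · exact mem_agreeing.2 ⟨(e.symm l).2, (mem_agreeing.1 hl).2⟩
  · exact e.symm.injective (Subtype.ext h)
  · obtain ⟨hpR, hpA⟩ := mem_agreeing.1 hp
    exact ⟨e ⟨p, hpR⟩, mem_agreeing.2 ⟨mem_univ _, by simpa using hpA⟩, by simp⟩

end Agreement

lemma card_image_mul_of_card_fiber {ι γ : Type*} [DecidableEq γ] {s : Finset ι} {f : ι → γ}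
    {m : ℕ} (h : ∀ j ∈ s, #{k ∈ s | f k = f j} = m) : #(s.image f) * m = #s := by
  rw [card_eq_sum_card_image f s, sum_const_nat]
  rintro _ hp
  obtain ⟨j, hj, rfl⟩ := mem_image.1 hp
  exact h j hj

section Restriction

variable {ι α β : Type*} [DecidableEq α]

def restrictRow (N' : Finset α) (b₀ : β) (f : α → β) : α → β :=
  N'.piecewise f fun _ => b₀

lemma restrictRow_agree_iff {N' A : Finset α} {b₀ : β} {f g : α → β} (hA : A ⊆ N') :
    (∀ a ∈ A, restrictRow N' b₀ f a = restrictRow N' b₀ g a) ↔ ∀ a ∈ A, f a = g a := by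
  refine forall₂_congr fun a ha => ?_
  simp only [restrictRow, piecewise_eq_of_mem _ _ _ (hA ha)]

lemma restrictRow_eq_iff {N' : Finset α} {b₀ : β} {f g : α → β} :
    restrictRow N' b₀ f = restrictRow N' b₀ g ↔ ∀ a ∈ N', f a = g a := by
  rw [← restrictRow_agree_iff subset_rfl]
  refine ⟨fun h a _ => congrFun h a, fun h => funext fun a => ?_⟩
  by_cases ha : a ∈ N'
  · exact h a ha
  · simp only [restrictRow, piecewise_eq_of_notMem _ _ _ ha]

lemma card_agreeing_image_restrictRow_mul [DecidableEq β] [DecidableEq (α → β)] {s : Finset ι}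
    {T : ι → α → β} {N' A : Finset α} {b₀ : β} {m : ℕ}
    (hfiber : ∀ k ∈ s, #(agreeing s T N' k) = m) (hA : A ⊆ N') (j : ι) :
    #(agreeing (s.image fun k => restrictRow N' b₀ (T k)) id A (restrictRow N' b₀ (T j))) * m
      = #(agreeing s T A j) := by
  have himage : agreeing (s.image fun k => restrictRow N' b₀ (T k)) id A (restrictRow N' b₀ (T j))
      = (agreeing s T A j).image fun k => restrictRow N' b₀ (T k) := by
    simp only [agreeing, filter_image, id, restrictRow_agree_iff hA]
  rw [himage]
  refine card_image_mul_of_card_fiber fun k hk => ?_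
  have hks : k ∈ s := (mem_agreeing.1 hk).1
  simp only [restrictRow_eq_iff]
  rw [← hfiber k hks, ← agreeing, agreeing_agreeing hk, union_eq_left.2 hA]

end Restriction

lemma card_agreeing_minor {ι α β : Type*} [Fintype ι] [DecidableEq α] [DecidableEq β]
    [DecidableEq (α → β)] {T : ι → α → β} {N T' N' A : Finset α} {c : Finset α → ℕ}
    (hT : ∀ B ⊆ N, ∀ i, #(agreeing univ T B i) = c B) (hT' : T' ⊆ N) (hN' : N' ⊆ N)
    (hA : A ⊆ N') (b₀ : β) {i₀ j : ι} (hj : j ∈ agreeing univ T T' i₀) :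
    #(agreeing ((agreeing univ T T' i₀).image fun k => restrictRow N' b₀ (T k)) id A
        (restrictRow N' b₀ (T j))) * c (N' ∪ T') = c (A ∪ T') := by
  have hfiber : ∀ k ∈ agreeing univ T T' i₀,
      #(agreeing (agreeing univ T T' i₀) T N' k) = c (N' ∪ T') := fun k hk => by
    rw [agreeing_agreeing hk]
    exact hT _ (union_subset hN' hT') k
  rw [card_agreeing_image_restrictRow_mul hfiber hA, agreeing_agreeing hj]
  exact hT _ (union_subset (hA.trans hN') hT') j

lemma pow_toNat_sub_eq_mul (v : ℕ) {a b c : ℤ} (hab : a ≤ b) (hbc : b ≤ c) :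
    v ^ (c - a).toNat = v ^ (b - a).toNat * v ^ (c - b).toNat := by
  rw [← pow_add]
  congr 1
  omega

theorem chi_minor_subset_general {α : Type*} [DecidableEq α]
    (N : Finset α) (r : Finset α → ℤ)
    (h2 : ∀ A B : Finset α, A ⊆ B → B ⊆ N → r A ≤ r B)
    (S T' : Finset α) (hTN : T' ⊆ N) (hST : Disjoint S T')
    (v : ℕ) (hv : 2 ≤ v) :
    -- a VOA(M, v) exists
    (∃ T : Fin (v ^ (r N).toNat) → α → Fin v,
      ∀ A ⊆ N, ∀ i,
        (Finset.univ.filter (fun j => ∀ a ∈ A, T j a = T i a)).card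
          = v ^ (r N - r A).toNat) →
    -- then a VOA(M', v) exists, where M' = M \ S / T' has ground set
    -- (N \ S) \ T' and rank function A ↦ r (A ∪ T') - r T'
    (∃ T : Fin (v ^ (r (((N \ S) \ T') ∪ T') - r T').toNat) → α → Fin v,
      ∀ A ⊆ (N \ S) \ T', ∀ i,
        (Finset.univ.filter (fun j => ∀ a ∈ A, T j a = T i a)).card
          = v ^ ((r (((N \ S) \ T') ∪ T') - r T') - (r (A ∪ T') - r T')).toNat) := by
  classical
  rintro ⟨T, hT⟩
  have hv₀ : 0 < v := by omega
  have hT'S : T' ⊆ N \ S := subset_sdiff.2 ⟨hTN, hST.symm⟩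
  rw [sdiff_union_of_subset hT'S]
  let i₀ : Fin (v ^ (r N).toNat) := ⟨0, pow_pos hv₀ _⟩
  let b₀ : Fin v := ⟨0, hv₀⟩
  let R := (agreeing univ T T' i₀).image fun k => restrictRow ((N \ S) \ T') b₀ (T k)
  have hcount : ∀ j ∈ agreeing univ T T' i₀, ∀ A ⊆ (N \ S) \ T',
      #(agreeing R id A (restrictRow ((N \ S) \ T') b₀ (T j)))
        = v ^ (r (N \ S) - r (A ∪ T')).toNat := by
    intro j hj A hA
    have hAT' : A ∪ T' ⊆ N \ S := union_subset (hA.trans sdiff_subset) hT'S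
    have h := card_agreeing_minor hT hTN (sdiff_subset.trans sdiff_subset) hA b₀ hj
    rw [sdiff_union_of_subset hT'S, pow_toNat_sub_eq_mul v (h2 _ _ hAT' sdiff_subset)
      (h2 _ _ sdiff_subset subset_rfl)] at h
    exact Nat.eq_of_mul_eq_mul_right (pow_pos hv₀ _) h
  have hR : #R = v ^ (r (N \ S) - r T').toNat := by
    simpa [agreeing_empty] using hcount i₀ (mem_agreeing.2 ⟨mem_univ _, fun _ _ => rfl⟩) ∅
      (empty_subset _)
  let e := R.equivFinOfCardEq hR
  refine ⟨fun k => (e.symm k).1, fun A hA i => ?_⟩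
  obtain ⟨j, hj, hji⟩ := mem_image.1 (e.symm i).2
  rw [sub_sub_sub_cancel_right]
  exact (card_agreeing_univ_equiv R e A i).trans (hji ▸ hcount j hj A hA)

/-- If `M' = M \ S / T'` is a minor of `M`, then `χ_M ⊆ χ_{M'}`:
for every `v ≥ 2`, if a `VOA(M, v)` exists then a `VOA(M', v)` exists. -/
theorem chi_minor_subset {α : Type*} [DecidableEq α]
    (N : Finset α) (r : Finset α → ℤ)
    (h1 : ∀ A ⊆ N, 0 ≤ r A ∧ r A ≤ A.card)
    (h2 : ∀ A B : Finset α, A ⊆ B → B ⊆ N → r A ≤ r B)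
    (h3 : ∀ A B : Finset α, A ⊆ N → B ⊆ N →
      r (A ∪ B) + r (A ∩ B) ≤ r A + r B)
    (S T' : Finset α) (hSN : S ⊆ N) (hTN : T' ⊆ N) (hST : Disjoint S T')
    (v : ℕ) (hv : 2 ≤ v) :
    -- a VOA(M, v) exists
    (∃ T : Fin (v ^ (r N).toNat) → α → Fin v,
      ∀ A ⊆ N, ∀ i,
        (Finset.univ.filter (fun j => ∀ a ∈ A, T j a = T i a)).card
          = v ^ (r N - r A).toNat) →
    -- then a VOA(M', v) exists, where M' = M \ S / T' has ground set
    -- (N \ S) \ T' and rank function A ↦ r (A ∪ T') - r T'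
    (∃ T : Fin (v ^ (r (((N \ S) \ T') ∪ T') - r T').toNat) → α → Fin v,
      ∀ A ⊆ (N \ S) \ T', ∀ i,
        (Finset.univ.filter (fun j => ∀ a ∈ A, T j a = T i a)).card
          = v ^ ((r (((N \ S) \ T') ∪ T') - r T') - (r (A ∪ T') - r T')).toNat) :=
  chi_minor_subset_general N r h2 S T' hTN hST v hv
end

section
/- For matroids M₁ and M₂ on disjoint ground sets, the p-characteristic set of their direct sum equals the intersection of their p-characteristic sets: χ_{M₁ ⊕ M₂} = χ_{M₁} ∩ χ_{M₂}. -/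
open Finset

/-- Restriction helper: from a VOA-like array `T`, fixing the values on `B`,
extract a smaller array whose agreement-counts on `A` match counts on `A ∪ B`. -/
lemma voa_restrict {α : Type*} [DecidableEq α] {v m k : ℕ} (hm : 0 < m)
    (T : Fin m → α → Fin v) (B : Finset α)
    (hB : ∀ i, (Finset.univ.filter fun j => ∀ a ∈ B, T j a = T i a).card = v ^ k) :
    ∃ T' : Fin (v ^ k) → α → Fin v, ∀ (A : Finset α) (i : Fin (v ^ k)), ∃ i' : Fin m,
      (Finset.univ.filter fun j => ∀ a ∈ A, T' j a = T' i a).card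
        = (Finset.univ.filter fun j => ∀ a ∈ A ∪ B, T j a = T i' a).card := by
  obtain ⟨i₀⟩ : Nonempty (Fin m) := ⟨⟨0, hm⟩⟩
  set S : Finset (Fin m) := Finset.univ.filter fun j => ∀ a ∈ B, T j a = T i₀ a with hS
  have hScard : S.card = v ^ k := hB i₀
  let e : Fin (v ^ k) ≃ S := (S.equivFinOfCardEq hScard).symm
  have heS : ∀ x : Fin (v ^ k), ∀ a ∈ B, T (e x).1 a = T i₀ a := by
    intro x
    have := (e x).2
    simp only [hS, Finset.mem_filter] at this
    exact this.2
  refine ⟨fun x => T (e x).1, fun A i => ⟨(e i).1, ?_⟩⟩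
  refine Finset.card_bij (fun j _ => (e j).1) ?_ ?_ ?_
  · intro j hj
    simp only [Finset.mem_filter, Finset.mem_univ, true_and] at hj ⊢
    intro a ha
    rcases Finset.mem_union.mp ha with h | h
    · exact hj a h
    · rw [heS j a h, heS i a h]
  · intro j₁ _ j₂ _ h
    exact e.injective (Subtype.val_injective h)
  · intro x hx
    simp only [Finset.mem_filter, Finset.mem_univ, true_and] at hx
    have hxS : x ∈ S := by
      rw [hS, Finset.mem_filter]
      refine ⟨Finset.mem_univ _, fun a ha => ?_⟩
      rw [hx a (Finset.mem_union_right _ ha), heS i a ha]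
    refine ⟨e.symm ⟨x, hxS⟩, ?_, by simp⟩
    simp only [Finset.mem_filter, Finset.mem_univ, true_and, Equiv.apply_symm_apply]
    intro a ha
    exact hx a (Finset.mem_union_left _ ha)

/-- Concatenation helper: combine two arrays into one on the union,
agreement-counts multiply. -/
lemma voa_combine {α : Type*} [DecidableEq α] {v m n : ℕ}
    (T₁ : Fin m → α → Fin v) (T₂ : Fin n → α → Fin v) (N₁ : Finset α) :
    ∃ T : Fin (m * n) → α → Fin v, ∀ (A : Finset α) (i : Fin (m * n)),
      ∃ (i₁ : Fin m) (i₂ : Fin n),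
      (Finset.univ.filter fun j => ∀ a ∈ A, T j a = T i a).card
        = (Finset.univ.filter fun j => ∀ a ∈ A ∩ N₁, T₁ j a = T₁ i₁ a).card *
          (Finset.univ.filter fun j => ∀ a ∈ A \ N₁, T₂ j a = T₂ i₂ a).card := by
  let e : Fin (m * n) ≃ Fin m × Fin n := finProdFinEquiv.symm
  refine ⟨fun j a => if a ∈ N₁ then T₁ (e j).1 a else T₂ (e j).2 a,
    fun A i => ⟨(e i).1, (e i).2, ?_⟩⟩
  have key : ∀ j : Fin (m * n),
      (∀ a ∈ A, (if a ∈ N₁ then T₁ (e j).1 a else T₂ (e j).2 a)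
        = (if a ∈ N₁ then T₁ (e i).1 a else T₂ (e i).2 a))
      ↔ ((∀ a ∈ A ∩ N₁, T₁ (e j).1 a = T₁ (e i).1 a)
          ∧ (∀ a ∈ A \ N₁, T₂ (e j).2 a = T₂ (e i).2 a)) := by
    intro j
    constructor
    · intro h
      constructor
      · intro a ha
        rw [Finset.mem_inter] at ha
        have := h a ha.1
        rwa [if_pos ha.2, if_pos ha.2] at this
      · intro a ha
        rw [Finset.mem_sdiff] at ha
        have := h a ha.1
        rwa [if_neg ha.2, if_neg ha.2] at this
    · rintro ⟨h₁, h₂⟩ a ha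
      by_cases hN : a ∈ N₁
      · rw [if_pos hN, if_pos hN]
        exact h₁ a (Finset.mem_inter.mpr ⟨ha, hN⟩)
      · rw [if_neg hN, if_neg hN]
        exact h₂ a (Finset.mem_sdiff.mpr ⟨ha, hN⟩)
  have step1 : (Finset.univ.filter fun j : Fin (m * n) =>
      ∀ a ∈ A, (if a ∈ N₁ then T₁ (e j).1 a else T₂ (e j).2 a)
        = (if a ∈ N₁ then T₁ (e i).1 a else T₂ (e i).2 a)).card
      = (Finset.univ.filter fun p : Fin m × Fin n =>
        (∀ a ∈ A ∩ N₁, T₁ p.1 a = T₁ (e i).1 a)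
          ∧ (∀ a ∈ A \ N₁, T₂ p.2 a = T₂ (e i).2 a)).card := by
    refine Finset.card_bij (fun j _ => e j) ?_ ?_ ?_
    · intro j hj
      simp only [Finset.mem_filter, Finset.mem_univ, true_and] at hj ⊢
      exact (key j).mp hj
    · intro j₁ _ j₂ _ h
      exact e.injective h
    · intro p hp
      simp only [Finset.mem_filter, Finset.mem_univ, true_and] at hp
      refine ⟨e.symm p, ?_, by simp⟩
      simp only [Finset.mem_filter, Finset.mem_univ, true_and]
      apply (key (e.symm p)).mpr
      simpa using hp
  rw [step1, ← Finset.univ_product_univ, Finset.filter_product (fun x => ∀ a ∈ A ∩ N₁, T₁ x a = T₁ (e i).1 a) (fun x => ∀ a ∈ A \ N₁, T₂ x a = T₂ (e i).2 a), Finset.card_product]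


/-- For matroids `M₁`, `M₂` on disjoint ground sets,
`χ_{M₁ ⊕ M₂} = χ_{M₁} ∩ χ_{M₂}`: for every `v ≥ 2`, a `VOA(M₁ ⊕ M₂, v)`
exists if and only if both a `VOA(M₁, v)` and a `VOA(M₂, v)` exist. -/
theorem chi_direct_sum {α : Type*} [DecidableEq α]
    (N₁ N₂ : Finset α) (hdisj : Disjoint N₁ N₂)
    (r₁ r₂ : Finset α → ℤ)
    (h11 : ∀ A ⊆ N₁, 0 ≤ r₁ A ∧ r₁ A ≤ A.card)
    (h12 : ∀ A B : Finset α, A ⊆ B → B ⊆ N₁ → r₁ A ≤ r₁ B)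
    (h13 : ∀ A B : Finset α, A ⊆ N₁ → B ⊆ N₁ →
      r₁ (A ∪ B) + r₁ (A ∩ B) ≤ r₁ A + r₁ B)
    (h21 : ∀ A ⊆ N₂, 0 ≤ r₂ A ∧ r₂ A ≤ A.card)
    (h22 : ∀ A B : Finset α, A ⊆ B → B ⊆ N₂ → r₂ A ≤ r₂ B)
    (h23 : ∀ A B : Finset α, A ⊆ N₂ → B ⊆ N₂ →
      r₂ (A ∪ B) + r₂ (A ∩ B) ≤ r₂ A + r₂ B)
    (v : ℕ) (hv : 2 ≤ v) :
    -- v ∈ χ_{M₁ ⊕ M₂}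
    (∃ T : Fin (v ^ (r₁ ((N₁ ∪ N₂) ∩ N₁) + r₂ ((N₁ ∪ N₂) ∩ N₂)).toNat) → α → Fin v,
      ∀ A ⊆ N₁ ∪ N₂, ∀ i,
        (Finset.univ.filter (fun j => ∀ a ∈ A, T j a = T i a)).card
          = v ^ ((r₁ ((N₁ ∪ N₂) ∩ N₁) + r₂ ((N₁ ∪ N₂) ∩ N₂))
                - (r₁ (A ∩ N₁) + r₂ (A ∩ N₂))).toNat)
    ↔
    -- v ∈ χ_{M₁} ∩ χ_{M₂}
    ((∃ T₁ : Fin (v ^ (r₁ N₁).toNat) → α → Fin v,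
        ∀ A ⊆ N₁, ∀ i,
          (Finset.univ.filter (fun j => ∀ a ∈ A, T₁ j a = T₁ i a)).card
            = v ^ (r₁ N₁ - r₁ A).toNat) ∧
     (∃ T₂ : Fin (v ^ (r₂ N₂).toNat) → α → Fin v,
        ∀ A ⊆ N₂, ∀ i,
          (Finset.univ.filter (fun j => ∀ a ∈ A, T₂ j a = T₂ i a)).card
            = v ^ (r₂ N₂ - r₂ A).toNat)) := by
  have hN1 : (N₁ ∪ N₂) ∩ N₁ = N₁ := Finset.inter_eq_right.mpr Finset.subset_union_left
  have hN2 : (N₁ ∪ N₂) ∩ N₂ = N₂ := Finset.inter_eq_right.mpr Finset.subset_union_right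
  rw [hN1, hN2]
  have h10 : r₁ ∅ = 0 := le_antisymm
    (by simpa using (h11 ∅ (Finset.empty_subset _)).2) (h11 ∅ (Finset.empty_subset _)).1
  have h20 : r₂ ∅ = 0 := le_antisymm
    (by simpa using (h21 ∅ (Finset.empty_subset _)).2) (h21 ∅ (Finset.empty_subset _)).1
  have hr1N : 0 ≤ r₁ N₁ := (h11 N₁ le_rfl).1
  have hr2N : 0 ≤ r₂ N₂ := (h21 N₂ le_rfl).1
  have hvpos : 0 < v := by omega
  have h21i : N₂ ∩ N₁ = (∅ : Finset α) := Finset.disjoint_iff_inter_eq_empty.mp hdisj.symm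
  have h12i : N₁ ∩ N₂ = (∅ : Finset α) := Finset.disjoint_iff_inter_eq_empty.mp hdisj
  constructor
  · rintro ⟨T, hT⟩
    constructor
    · -- extract VOA(M₁, v) by fixing values on N₂
      have hB : ∀ i, (Finset.univ.filter fun j => ∀ a ∈ N₂, T j a = T i a).card
          = v ^ (r₁ N₁).toNat := by
        intro i
        rw [hT N₂ Finset.subset_union_right i]
        congr 1
        rw [h21i, Finset.inter_self, h10]
        ring_nf
      obtain ⟨T₁, hT₁⟩ := voa_restrict (Nat.pow_pos hvpos) T N₂ hB
      refine ⟨T₁, fun A hA i => ?_⟩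
      obtain ⟨i', hi'⟩ := hT₁ A i
      rw [hi', hT (A ∪ N₂) (Finset.union_subset (hA.trans Finset.subset_union_left)
        Finset.subset_union_right) i']
      congr 1
      have e1 : (A ∪ N₂) ∩ N₁ = A := by
        rw [Finset.union_inter_distrib_right, h21i, Finset.union_empty,
          Finset.inter_eq_left.mpr hA]
      have e2 : (A ∪ N₂) ∩ N₂ = N₂ := Finset.inter_eq_right.mpr Finset.subset_union_right
      rw [e1, e2]
      ring_nf
    · -- extract VOA(M₂, v) by fixing values on N₁
      have hB : ∀ i, (Finset.univ.filter fun j => ∀ a ∈ N₁, T j a = T i a).card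
          = v ^ (r₂ N₂).toNat := by
        intro i
        rw [hT N₁ Finset.subset_union_left i]
        congr 1
        rw [h12i, Finset.inter_self, h20]
        ring_nf
      obtain ⟨T₂, hT₂⟩ := voa_restrict (Nat.pow_pos hvpos) T N₁ hB
      refine ⟨T₂, fun A hA i => ?_⟩
      obtain ⟨i', hi'⟩ := hT₂ A i
      rw [hi', hT (A ∪ N₁) (Finset.union_subset (hA.trans Finset.subset_union_right)
        Finset.subset_union_left) i']
      congr 1
      have e1 : (A ∪ N₁) ∩ N₂ = A := by
        rw [Finset.union_inter_distrib_right, h12i, Finset.union_empty,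
          Finset.inter_eq_left.mpr hA]
      have e2 : (A ∪ N₁) ∩ N₁ = N₁ := Finset.inter_eq_right.mpr Finset.subset_union_right
      rw [e1, e2]
      ring_nf
  · rintro ⟨⟨T₁, hT₁⟩, ⟨T₂, hT₂⟩⟩
    obtain ⟨T, hTc⟩ := voa_combine T₁ T₂ N₁
    have hmn : v ^ (r₁ N₁ + r₂ N₂).toNat = v ^ (r₁ N₁).toNat * v ^ (r₂ N₂).toNat := by
      rw [Int.toNat_add hr1N hr2N, pow_add]
    rw [hmn]
    refine ⟨T, fun A hA i => ?_⟩
    obtain ⟨i₁, i₂, hi⟩ := hTc A i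
    have hAd : A \ N₁ = A ∩ N₂ := by
      ext a
      simp only [Finset.mem_sdiff, Finset.mem_inter]
      constructor
      · rintro ⟨ha, hn⟩
        exact ⟨ha, (Finset.mem_union.mp (hA ha)).resolve_left hn⟩
      · rintro ⟨ha, hn⟩
        exact ⟨ha, fun h1 => Finset.disjoint_left.mp hdisj h1 hn⟩
    rw [hi, hAd, hT₁ (A ∩ N₁) Finset.inter_subset_right i₁,
      hT₂ (A ∩ N₂) Finset.inter_subset_right i₂, ← pow_add]
    congr 1
    have m1 : r₁ (A ∩ N₁) ≤ r₁ N₁ := h12 _ _ Finset.inter_subset_right le_rfl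
    have m2 : r₂ (A ∩ N₂) ≤ r₂ N₂ := h22 _ _ Finset.inter_subset_right le_rfl
    rw [← Int.toNat_add (by omega) (by omega)]
    congr 1
    ring
end

section
/- Let M = (N, r) be a regular matroid represented by a totally unimodular matrix U with r(N) rows and columns indexed by N. For any integer v ≥ 2, the array T whose rows are {xU mod v : x ∈ Z_v^{r(N)}} is a VOA(M, v). Consequently every integer v ≥ 2 belongs to χ_M. -/
open Matrix in
/-- Key structure lemma: a maximal nonsingular square submatrix of a TU
matrix with columns in `A` has unit determinant and its columns span
(integrally) all columns in `A`. -/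
private theorem tu_key {α : Type*} [DecidableEq α] {m : ℕ} (U : Matrix (Fin m) α ℤ)
    (hTU : ∀ (k : ℕ) (f : Fin k → Fin m) (g : Fin k → α),
      (U.submatrix f g).det ∈ ({-1, 0, 1} : Set ℤ))
    (A : Finset α) :
    ∃ (k : ℕ) (R : Fin k → Fin m) (C : Fin k → α),
      (∀ t, C t ∈ A) ∧ ((U.submatrix R C).det * (U.submatrix R C).det = 1) ∧
      (∀ a ∈ A, ∃ w : Fin k → ℤ, ∀ i, U i a = ∑ j, w j * U i (C j)) := by
  classical
  set P : ℕ → Prop := fun j => ∃ (R : Fin j → Fin m) (C : Fin j → α),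
      (∀ t, C t ∈ A) ∧ (U.submatrix R C).det ≠ 0 with hP
  have hP0 : P 0 := ⟨Fin.elim0, Fin.elim0, fun t => t.elim0, by simp⟩
  have hPle : ∀ j, P j → j ≤ m := by
    rintro j ⟨R, C, hC, hdet⟩
    by_contra h
    obtain ⟨t, t', hne, heq⟩ := Fintype.exists_ne_map_eq_of_card_lt R
      (by simpa using Nat.lt_of_not_le h)
    exact hdet (Matrix.det_zero_of_row_eq hne
      (funext fun s => by simp [Matrix.submatrix_apply, heq]))
  set k := Nat.findGreatest P m with hk
  have hPk : P k := Nat.findGreatest_spec (Nat.zero_le m) hP0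
  have hmax : ¬ P (k+1) := by
    intro h
    have := Nat.le_findGreatest (hPle _ h) h
    omega
  obtain ⟨R, C, hC, hdet⟩ := hPk
  have hdd : (U.submatrix R C).det * (U.submatrix R C).det = 1 := by
    rcases hTU k R C with h | h | h
    · rw [h]; ring
    · exact absurd h hdet
    · rw [h]; ring
  refine ⟨k, R, C, hC, hdd, ?_⟩
  intro a ha
  set D := U.submatrix R C with hD
  set b : Fin k → ℤ := fun t => U (R t) a with hb
  set w : Fin k → ℤ := D.det • D.cramer b with hw
  have hDw : D.mulVec w = b := by
    rw [hw, Matrix.mulVec_smul, Matrix.mulVec_cramer, smul_smul, hdd, one_smul]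
  refine ⟨w, fun i => ?_⟩
  have hDinj : ∀ z : Fin k → ℤ, D.mulVec z = 0 → z = 0 := by
    intro z hz
    have h1 : (D.adjugate * D).mulVec z = D.adjugate.mulVec 0 := by
      rw [← Matrix.mulVec_mulVec, hz]
    rw [Matrix.adjugate_mul, Matrix.mulVec_zero, Matrix.smul_mulVec,
      Matrix.one_mulVec] at h1
    funext j
    have h2 := congrFun h1 j
    simp only [Pi.smul_apply, smul_eq_mul, Pi.zero_apply] at h2
    rcases mul_eq_zero.1 h2 with h | h
    · exact absurd h hdet
    · exact h
  -- the extended (k+1)×(k+1) submatrix has zero determinant by maximality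
  set E := U.submatrix (Fin.snoc R i) (Fin.snoc C a) with hE
  have hEdet : E.det = 0 := by
    by_contra h
    exact hmax ⟨Fin.snoc R i, Fin.snoc C a,
      fun t => Fin.lastCases (by simpa using ha) (fun t' => by simpa using hC t') t, h⟩
  obtain ⟨c, hc0, hc⟩ := (Matrix.exists_mulVec_eq_zero_iff).2 hEdet
  set c₀ : Fin k → ℤ := fun j => c (Fin.castSucc j) with hc₀
  set cl := c (Fin.last k) with hcl
  have hrow : ∀ t : Fin k, D.mulVec c₀ t + b t * cl = 0 := by
    intro t
    have h3 := congrFun hc (Fin.castSucc t)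
    simpa [hE, hD, hb, hc₀, hcl, Matrix.mulVec, dotProduct,
      Fin.sum_univ_castSucc] using h3
  have hlast : (∑ j, U i (C j) * c₀ j) + U i a * cl = 0 := by
    have h3 := congrFun hc (Fin.last k)
    simpa [hE, hc₀, hcl, Matrix.mulVec, dotProduct,
      Fin.sum_univ_castSucc] using h3
  have hclne : cl ≠ 0 := by
    intro h
    apply hc0
    have hz : c₀ = 0 := hDinj c₀ (funext fun t => by
      have h4 := hrow t; rw [h] at h4; simpa using h4)
    funext s
    refine Fin.lastCases h (fun j => congrFun hz j) s
  have hkey : c₀ = (-cl) • w := by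
    have h5 : D.mulVec (c₀ - (-cl) • w) = 0 := by
      rw [Matrix.mulVec_sub, Matrix.mulVec_smul, hDw]
      funext t
      have := hrow t
      simp only [Pi.sub_apply, Pi.smul_apply, smul_eq_mul, Pi.zero_apply]
      ring_nf
      ring_nf at this
      linarith
    exact sub_eq_zero.mp (hDinj _ h5)
  -- plug into the last row identity
  have h6 : (∑ j, U i (C j) * ((-cl) * w j)) + U i a * cl = 0 := by
    have := hlast
    rw [hkey] at this
    simpa using this
  have h7 : cl * (U i a - ∑ j, w j * U i (C j)) = 0 := by
    have : (∑ j, U i (C j) * ((-cl) * w j)) = -cl * ∑ j, w j * U i (C j) := by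
      rw [Finset.mul_sum]
      exact Finset.sum_congr rfl fun j _ => by ring
    rw [this] at h6
    ring_nf
    ring_nf at h6
    linarith
  rcases mul_eq_zero.1 h7 with h | h
  · exact absurd h hclne
  · linarith [h]

open Matrix in
private theorem tu_rank {α : Type*} [DecidableEq α] {m k : ℕ} (U : Matrix (Fin m) α ℤ)
    (A : Finset α) (R : Fin k → Fin m) (C : Fin k → α) (hC : ∀ t, C t ∈ A)
    (hdd : (U.submatrix R C).det * (U.submatrix R C).det = 1)
    (hw : ∀ a ∈ A, ∃ w : Fin k → ℤ, ∀ i, U i a = ∑ j, w j * U i (C j)) :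
    (U.submatrix id (fun a : {x // x ∈ A} => (a : α))).rank = k := by
  classical
  set B := U.submatrix id (fun a : {x // x ∈ A} => (a : α)) with hB
  set B₀ := U.submatrix id C with hB0
  have hdet : (U.submatrix R C).det ≠ 0 := fun h => by rw [h] at hdd; simp at hdd
  have hrange : LinearMap.range B.mulVecLin = LinearMap.range B₀.mulVecLin := by
    rw [Matrix.range_mulVecLin, Matrix.range_mulVecLin]
    apply le_antisymm
    · rw [Submodule.span_le]
      rintro _ ⟨a, rfl⟩
      obtain ⟨w, hwa⟩ := hw a a.2
      have hcol : Bᵀ a = ∑ j, w j • B₀ᵀ j := by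
        funext i
        simp only [Matrix.transpose_apply, hB, hB0, Matrix.submatrix_apply, id,
          Finset.sum_apply, Pi.smul_apply, smul_eq_mul]
        exact hwa i
      rw [show B.col a = Bᵀ a from rfl, hcol]
      exact Submodule.sum_mem _ fun j _ =>
        Submodule.smul_mem _ _ (Submodule.subset_span ⟨j, rfl⟩)
    · rw [Submodule.span_le]
      rintro _ ⟨j, rfl⟩
      refine Submodule.subset_span ⟨⟨C j, hC j⟩, ?_⟩
      funext i
      simp [hB, hB0]
  have hinj : Function.Injective B₀.mulVecLin := by
    rw [injective_iff_map_eq_zero]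
    intro z hz
    have hz' : B₀.mulVec z = 0 := hz
    set D := U.submatrix R C with hD
    have hDz : D.mulVec z = 0 := by
      funext t
      have := congrFun hz' (R t)
      simpa [Matrix.mulVec, dotProduct, hB0, hD] using this
    have h1 : (D.adjugate * D).mulVec z = D.adjugate.mulVec 0 := by
      rw [← Matrix.mulVec_mulVec, hDz]
    rw [Matrix.adjugate_mul, Matrix.mulVec_zero, Matrix.smul_mulVec,
      Matrix.one_mulVec] at h1
    funext j
    have h2 := congrFun h1 j
    simp only [Pi.smul_apply, smul_eq_mul, Pi.zero_apply] at h2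
    rcases mul_eq_zero.1 h2 with h | h
    · exact absurd h hdet
    · exact h
  rw [Matrix.rank, hrange, ← LinearEquiv.finrank_eq (LinearEquiv.ofInjective B₀.mulVecLin hinj),
    Module.finrank_pi, Fintype.card_fin]

private theorem fiber_card {v m k : ℕ} [NeZero v] (hkm : k ≤ m)
    (ψ : (Fin m → ZMod v) →ₗ[ZMod v] (Fin k → ZMod v))
    (hsurj : Function.Surjective ψ) (x : Fin m → ZMod v) :
    (Finset.univ.filter (fun y => ψ y = ψ x)).card = v ^ (m - k) := by
  classical
  have hfib : ∀ z : Fin k → ZMod v,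
      (Finset.univ.filter (fun y => ψ y = z)).card
        = (Finset.univ.filter (fun y => ψ y = (0 : Fin k → ZMod v))).card := by
    intro z
    obtain ⟨x0, rfl⟩ := hsurj z
    apply Finset.card_nbij' (i := fun y => y - x0) (j := fun y => y + x0)
    · intro y hy
      simp only [Finset.mem_coe, Finset.mem_filter, Finset.mem_univ, true_and] at *
      rw [map_sub, hy, sub_self]
    · intro y hy
      simp only [Finset.mem_coe, Finset.mem_filter, Finset.mem_univ, true_and] at *
      rw [map_add, hy, zero_add]
    · intro y _; simp
    · intro y _; simp
  have hcard : (Finset.univ : Finset (Fin m → ZMod v)).card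
      = ∑ z : Fin k → ZMod v, (Finset.univ.filter (fun y => ψ y = z)).card :=
    Finset.card_eq_sum_card_fiberwise (fun y _ => Finset.mem_univ (ψ y))
  have hvm : (Finset.univ : Finset (Fin m → ZMod v)).card = v ^ m := by
    rw [Finset.card_univ, Fintype.card_fun, ZMod.card, Fintype.card_fin]
  have hvk : v ^ m = v ^ k *
      (Finset.univ.filter (fun y => ψ y = (0 : Fin k → ZMod v))).card := by
    rw [← hvm, hcard]
    rw [Finset.sum_congr rfl (fun z _ => hfib z), Finset.sum_const, Finset.card_univ,
      Fintype.card_fun, ZMod.card, Fintype.card_fin, smul_eq_mul]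
  have hpow : v ^ m = v ^ k * v ^ (m - k) := by
    rw [← pow_add, Nat.add_sub_cancel' hkm]
  rw [hfib (ψ x)]
  have hvkpos : 0 < v ^ k := Nat.pow_pos (Nat.pos_of_ne_zero (NeZero.ne v))
  exact Nat.eq_of_mul_eq_mul_left hvkpos (by rw [← hvk, ← hpow])

/-- If `M = (N, r)` is represented by a totally unimodular matrix `U` with
`r N` rows, then for every `v ≥ 2` the array whose rows are
`{x U mod v : x ∈ Z_v^{r N}}` is a `VOA(M, v)`; hence every `v ≥ 2`
belongs to `χ_M`. -/
theorem regular_matroid_voa {α : Type*} [DecidableEq α]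
    (N : Finset α) (m : ℕ) (U : Matrix (Fin m) α ℤ)
    -- U is totally unimodular
    (hTU : ∀ (k : ℕ) (f : Fin k → Fin m) (g : Fin k → α),
      (U.submatrix f g).det ∈ ({-1, 0, 1} : Set ℤ))
    -- M is the vector matroid of U : r A is the rank of the columns in A
    (r : Finset α → ℕ)
    (hr : ∀ A ⊆ N, r A
      = (U.submatrix id (fun a : {x // x ∈ A} => (a : α))).rank)
    (hm : r N = m)
    (v : ℕ) (hv : 2 ≤ v) [NeZero v] :
    ∀ A ⊆ N, ∀ x : Fin m → ZMod v,
      (Finset.univ.filter (fun y : Fin m → ZMod v =>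
        ∀ a ∈ A,
          Matrix.vecMul y (U.map (Int.cast : ℤ → ZMod v)) a
            = Matrix.vecMul x (U.map (Int.cast : ℤ → ZMod v)) a)).card
        = v ^ (r N - r A) := by
  classical
  intro A hA x
  obtain ⟨k, R, C, hC, hdd, hw⟩ := tu_key U hTU A
  have hrk : (U.submatrix id (fun a : {x // x ∈ A} => (a : α))).rank = k :=
    tu_rank U A R C hC hdd hw
  have hrA : r A = k := by rw [hr A hA, hrk]
  have hkm : k ≤ m := by
    have h1 := Matrix.rank_le_card_height (U.submatrix id (fun a : {x // x ∈ A} => (a : α)))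
    rw [hrk] at h1
    simpa using h1
  set Ub := U.map (Int.cast : ℤ → ZMod v) with hUb
  set ψ : (Fin m → ZMod v) →ₗ[ZMod v] (Fin k → ZMod v) :=
    Matrix.mulVecLin (Matrix.transpose (Ub.submatrix id C)) with hψ
  have hψapp : ∀ (y : Fin m → ZMod v) (j : Fin k),
      ψ y j = Matrix.vecMul y Ub (C j) := by
    intro y j
    simp only [hψ, Matrix.mulVecLin_apply, Matrix.mulVec, Matrix.vecMul,
      dotProduct, Matrix.transpose_apply, Matrix.submatrix_apply, id]
    exact Finset.sum_congr rfl fun i _ => mul_comm _ _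
  set D := (U.submatrix R C).map (Int.cast : ℤ → ZMod v) with hDv
  have hcast : (((U.submatrix R C).det : ℤ) : ZMod v) = D.det := by
    have h := RingHom.map_det (Int.castRingHom (ZMod v)) (U.submatrix R C)
    rw [hDv]
    simpa [RingHom.mapMatrix_apply, Int.coe_castRingHom] using h
  have hDdet : D.det * D.det = 1 := by
    rw [← hcast, ← Int.cast_mul, hdd, Int.cast_one]
  have hDunit : IsUnit D.det := IsUnit.of_mul_eq_one _ hDdet
  have hsurj : Function.Surjective ψ := by
    intro z
    set w := Matrix.vecMul z D⁻¹ with hwz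
    refine ⟨fun i => ∑ t, if R t = i then w t else 0, ?_⟩
    funext j
    rw [hψapp]
    have step1 : Matrix.vecMul (fun i => ∑ t, if R t = i then w t else 0) Ub (C j)
        = ∑ t, w t * Ub (R t) (C j) := by
      simp only [Matrix.vecMul, dotProduct]
      calc (∑ i, (∑ t, if R t = i then w t else 0) * Ub i (C j))
          = ∑ i, ∑ t, (if R t = i then w t * Ub i (C j) else 0) := by
            refine Finset.sum_congr rfl fun i _ => ?_
            rw [Finset.sum_mul]
            exact Finset.sum_congr rfl fun t _ => by rw [ite_mul, zero_mul]
        _ = ∑ t, ∑ i, (if R t = i then w t * Ub i (C j) else 0) := Finset.sum_comm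
        _ = ∑ t, w t * Ub (R t) (C j) := by
            refine Finset.sum_congr rfl fun t _ => ?_
            rw [Finset.sum_ite_eq]
            simp
    rw [step1]
    have step2 : ∑ t, w t * Ub (R t) (C j) = Matrix.vecMul w D j := by
      simp only [Matrix.vecMul, dotProduct, hDv, hUb, Matrix.map_apply,
        Matrix.submatrix_apply]
    rw [step2, hwz, Matrix.vecMul_vecMul, Matrix.nonsing_inv_mul D hDunit,
      Matrix.vecMul_one]
  have hset : (Finset.univ.filter (fun y : Fin m → ZMod v =>
      ∀ a ∈ A, Matrix.vecMul y Ub a = Matrix.vecMul x Ub a))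
      = Finset.univ.filter (fun y => ψ y = ψ x) := by
    apply Finset.filter_congr
    intro y _
    constructor
    · intro h
      funext j
      rw [hψapp, hψapp, h (C j) (hC j)]
    · intro h a ha
      obtain ⟨wa, hwa⟩ := hw a ha
      have key : ∀ yy : Fin m → ZMod v, Matrix.vecMul yy Ub a
          = ∑ j, ((wa j : ℤ) : ZMod v) * Matrix.vecMul yy Ub (C j) := by
        intro yy
        simp only [Matrix.vecMul, dotProduct, hUb, Matrix.map_apply]
        calc ∑ i, yy i * ((U i a : ℤ) : ZMod v)
            = ∑ i, ∑ j, ((wa j : ℤ) : ZMod v) * (yy i * ((U i (C j) : ℤ) : ZMod v)) := by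
              refine Finset.sum_congr rfl fun i _ => ?_
              rw [hwa i]
              push_cast
              rw [Finset.mul_sum]
              exact Finset.sum_congr rfl fun j _ => by ring
          _ = ∑ j, ((wa j : ℤ) : ZMod v) * ∑ i, yy i * ((U i (C j) : ℤ) : ZMod v) := by
              rw [Finset.sum_comm]
              exact Finset.sum_congr rfl fun j _ => by rw [Finset.mul_sum]
      rw [key y, key x]
      refine Finset.sum_congr rfl fun j _ => ?_
      rw [← hψapp, ← hψapp, h]
  rw [hset, hm, hrA]
  exact fiber_card hkm ψ hsurj x
end
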